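/- Let v₁,…,v_N ∈ ℤⁿ be vectors whose nonnegative real span equals all of ℝⁿ, let Λ = {(⟨u, v₁⟩,…,⟨u, v_N⟩) : u ∈ ℤⁿ} ⊆ ℤ^N, and grade S = ℂ[x₁,…,x_N] by ℤ^N/Λ, assigning to the monomial x^a the class of a. Let I₀ ⊆ S be a monomial ideal. Then the ℂ-vector space of degree-preserving S-module homomorphisms φ : I₀ → S/I₀ — i.e., those φ such that for every monomial x^b ∈ I₀ the element φ(x^b) is a ℂ-linear combination of residue classes of monomials x^{b'} with b' − b ∈ Λ — is finite-dimensional. -/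

import Mathlib

/-!
A degree-zero homomorphism `φ : I₀ → S/I₀` is determined by its values on finitely many monomials
of `I₀`, and its value on `x^b` lies in the span of the classes of the `x^{b'}` with `b' - b ∈ Λ`.
Writing `b' - b = (⟨u, v i⟩)ᵢ`, positivity of `b'` says `⟨u, v i⟩ ≥ -b i` for all `i`. Since the
`v i` positively span `ℝⁿ`, both `±eₖ` are nonnegative combinations of them, so every coordinate of
`u` is bounded on both sides and there are only finitely many such `b'`. Hence the degree-zero
homomorphisms embed into a finite product of finite-dimensional spaces.
-/

open MvPolynomial

section HomsWithValuesIn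

variable {R K M P β : Type*} [Semiring R] [Field K] [AddCommMonoid M] [Module R M]
  [AddCommGroup P] [Module R P] [Module K P] [SMulCommClass R K P]

variable (R K) in
def homsWithValuesIn (x : β → M) (c : β → Submodule K P) : Submodule K (M →ₗ[R] P) :=
  ⨅ j, (c j).comap (LinearMap.applyₗ' K (x j))

theorem mem_homsWithValuesIn {x : β → M} {c : β → Submodule K P} {φ : M →ₗ[R] P} :
    φ ∈ homsWithValuesIn R K x c ↔ ∀ j, φ (x j) ∈ c j := by
  simp [homsWithValuesIn]

theorem Submodule.exists_finset_le_iSup_span_singleton [Module.Finite R M] {x : β → M}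
    (hx : Submodule.span R (Set.range x) = ⊤) :
    ∃ F : Finset β, ⊤ ≤ ⨆ j ∈ F, R ∙ x j :=
  CompleteLattice.IsCompactElement.exists_finset_of_le_iSup _
    ((Submodule.fg_iff_compact ⊤).1 Module.Finite.fg_top) _ (span_range_eq_iSup.symm.trans hx).ge

theorem LinearMap.ext_of_top_le_iSup_span_singleton {F : Finset β} {x : β → M}
    (hF : ⊤ ≤ ⨆ j ∈ F, R ∙ x j) {φ ψ : M →ₗ[R] P} (h : ∀ j ∈ F, φ (x j) = ψ (x j)) : φ = ψ := by
  have : ⊤ ≤ LinearMap.eqLocus φ ψ :=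
    hF.trans <| iSup₂_le fun j hj => (Submodule.span_singleton_le_iff_mem _ _).2 (h j hj)
  exact LinearMap.ext fun m => this Submodule.mem_top

theorem finiteDimensional_homsWithValuesIn [Module.Finite R M] {x : β → M}
    (hx : Submodule.span R (Set.range x) = ⊤) (c : β → Submodule K P)
    [∀ j, FiniteDimensional K (c j)] : FiniteDimensional K (homsWithValuesIn R K x c) := by
  obtain ⟨F, hF⟩ := Submodule.exists_finset_le_iSup_span_singleton hx
  let restrict : homsWithValuesIn R K x c →ₗ[K] ((j : F) → c j) :=
    LinearMap.pi fun j => ((LinearMap.applyₗ' K (x j)).comp (Submodule.subtype _)).codRestrict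
      (c j) fun φ => mem_homsWithValuesIn.1 φ.2 j
  refine Module.Finite.of_injective restrict fun φ ψ h => Subtype.ext ?_
  refine LinearMap.ext_of_top_le_iSup_span_singleton hF fun j hj => ?_
  exact congrArg Subtype.val (congrFun h ⟨j, hj⟩)

end HomsWithValuesIn

def PositivelySpans {ι κ : Type*} [Fintype ι] (v : ι → κ → ℤ) : Prop :=
  ∀ x : κ → ℝ, ∃ c : ι → ℝ, (∀ i, 0 ≤ c i) ∧ x = ∑ i, c i • fun j => (v i j : ℝ)

theorem sum_mul_le_dotProduct {ι κ 𝕜 : Type*} [Fintype ι] [Fintype κ] [CommSemiring 𝕜]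
    [PartialOrder 𝕜] [IsOrderedRing 𝕜] {w : ι → κ → 𝕜} {c l : ι → 𝕜} {u x : κ → 𝕜}
    (hc : ∀ i, 0 ≤ c i) (hx : x = ∑ i, c i • w i) (hu : ∀ i, l i ≤ u ⬝ᵥ w i) :
    ∑ i, c i * l i ≤ u ⬝ᵥ x := by
  rw [hx, dotProduct_sum]
  exact Finset.sum_le_sum fun i _ => by
    rw [dotProduct_smul, smul_eq_mul]; exact mul_le_mul_of_nonneg_left (hu i) (hc i)

variable {ι κ : Type*} [Fintype ι] [Fintype κ] {v : ι → κ → ℤ}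

theorem PositivelySpans.exists_le_dotProduct (hv : PositivelySpans v) (l : ι → ℤ) (x : κ → ℝ) :
    ∃ m : ℝ, ∀ u : κ → ℤ, (∀ i, l i ≤ u ⬝ᵥ v i) → m ≤ (Int.cast ∘ u) ⬝ᵥ x := by
  obtain ⟨c, hc, hx⟩ := hv x
  refine ⟨∑ i, c i * l i, fun u hu => sum_mul_le_dotProduct hc hx fun i => ?_⟩
  have := (Int.cast_le (R := ℝ)).2 (hu i)
  simpa [dotProduct] using this

theorem PositivelySpans.finite_setOf_forall_le_dotProduct (hv : PositivelySpans v)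
    (l : ι → ℤ) : {u : κ → ℤ | ∀ i, l i ≤ u ⬝ᵥ v i}.Finite := by
  classical
  choose lo hlo using fun k => hv.exists_le_dotProduct l (Pi.single k 1)
  choose hi hhi using fun k => hv.exists_le_dotProduct l (-Pi.single k 1)
  refine (Set.finite_Icc (fun k => ⌈lo k⌉) fun k => ⌊-hi k⌋).subset fun u hu =>
    ⟨fun k => ?_, fun k => ?_⟩
  · simpa [Int.ceil_le] using hlo k u hu
  · have := hhi k u hu
    rw [dotProduct_neg, dotProduct_single_one] at this
    rw [Int.le_floor]
    exact le_neg_of_le_neg this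

theorem PositivelySpans.finite_setOf_sub_mem_lattice (hv : PositivelySpans v) (b : ι →₀ ℕ) :
    {b' : ι →₀ ℕ | ∃ u : κ → ℤ, ∀ i, (b' i : ℤ) - b i = ∑ j, u j * v i j}.Finite := by
  classical
  refine ((hv.finite_setOf_forall_le_dotProduct fun i => -b i).image fun u =>
    Finsupp.equivFunOnFinite.symm fun i => (b i + u ⬝ᵥ v i).toNat).subset ?_
  rintro b' ⟨u, hu⟩
  refine ⟨u, fun i => ?_, Finsupp.ext fun i => ?_⟩
  · have := hu i; simp only [dotProduct]; omega
  · have := hu i; simp only [dotProduct, Finsupp.coe_equivFunOnFinite_symm]; omega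

theorem MvPolynomial.span_range_monomial_mem_eq_top {σ R : Type*} [CommSemiring R]
    {I : Ideal (MvPolynomial σ R)} {T : Set (σ →₀ ℕ)}
    (hI : I = Ideal.span ((fun b => monomial b (1 : R)) '' T)) :
    Submodule.span (MvPolynomial σ R)
      (Set.range fun b : {b // monomial b (1 : R) ∈ I} => (⟨monomial b.1 1, b.2⟩ : I)) = ⊤ := by
  subst hI
  refine top_le_iff.1 (Submodule.span_span_coe_preimage.symm.le.trans (Submodule.span_mono ?_))
  rintro ⟨p, hp⟩ ⟨b, -, rfl⟩
  exact ⟨⟨b, hp⟩, rfl⟩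

/-- Finite-dimensionality of the space `Hom(I₀, S/I₀)₀` of degree-preserving
module homomorphisms, for a monomial ideal `I₀` in the Cox ring
`S = ℂ[x₁,…,x_N]` graded by `ℤ^N/Λ`, where
`Λ = {(⟨u,v₁⟩,…,⟨u,v_N⟩) : u ∈ ℤⁿ}` and the `v i` positively span `ℝⁿ`:
there is a finite set of degree-preserving homomorphisms spanning (over `ℂ`)
all degree-preserving homomorphisms. -/
theorem hom_degree_zero_finite_dimensional {n N : ℕ} (v : Fin N → Fin n → ℤ)
    (hspan : ∀ x : Fin n → ℝ, ∃ c : Fin N → ℝ, (∀ i, 0 ≤ c i) ∧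
      x = ∑ i, c i • (fun j => (v i j : ℝ)))
    (I₀ : Ideal (MvPolynomial (Fin N) ℂ))
    (hI₀monomial : ∃ T : Set (Fin N →₀ ℕ),
      I₀ = Ideal.span ((fun b => monomial b (1 : ℂ)) '' T))
    -- the degree-preserving condition on a module homomorphism `φ : I₀ → S/I₀`
    (DegZero : (↥I₀ →ₗ[MvPolynomial (Fin N) ℂ]
      (MvPolynomial (Fin N) ℂ ⧸ I₀)) → Prop)
    (hDegZero : ∀ φ, DegZero φ ↔
      ∀ (b : Fin N →₀ ℕ) (hb : monomial b (1 : ℂ) ∈ I₀),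
        φ ⟨monomial b (1 : ℂ), hb⟩ ∈ Submodule.span ℂ
          {q : MvPolynomial (Fin N) ℂ ⧸ I₀ | ∃ b' : Fin N →₀ ℕ,
            (∃ u : Fin n → ℤ, ∀ i, (b' i : ℤ) - (b i : ℤ) = ∑ j, u j * v i j) ∧
            q = Ideal.Quotient.mk I₀ (monomial b' (1 : ℂ))}) :
    ∃ s : Finset (↥I₀ →ₗ[MvPolynomial (Fin N) ℂ]
        (MvPolynomial (Fin N) ℂ ⧸ I₀)),
      (∀ φ ∈ s, DegZero φ) ∧
      ∀ φ, DegZero φ → φ ∈ Submodule.span ℂ (s : Set _) := by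
  obtain ⟨T, hT⟩ := hI₀monomial
  let c (b : {b // monomial b (1 : ℂ) ∈ I₀}) : Submodule ℂ (MvPolynomial (Fin N) ℂ ⧸ I₀) :=
    Submodule.span ℂ {q | ∃ b', (∃ u : Fin n → ℤ, ∀ i, (b' i : ℤ) - b.1 i = ∑ j, u j * v i j) ∧
      q = Ideal.Quotient.mk I₀ (monomial b' 1)}
  have hc (b) : FiniteDimensional ℂ (c b) := by
    refine FiniteDimensional.span_of_finite ℂ <|
      ((PositivelySpans.finite_setOf_sub_mem_lattice hspan b.1).image
        fun b' => Ideal.Quotient.mk I₀ (monomial b' 1)).subset ?_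
    rintro q ⟨b', hb', rfl⟩
    exact ⟨b', hb', rfl⟩
  let W := homsWithValuesIn (MvPolynomial (Fin N) ℂ) ℂ
    (fun b : {b // monomial b (1 : ℂ) ∈ I₀} => (⟨monomial b.1 1, b.2⟩ : I₀)) c
  have hW (φ) : DegZero φ ↔ φ ∈ W := by
    rw [hDegZero, mem_homsWithValuesIn, Subtype.forall]
  have : FiniteDimensional ℂ W :=
    finiteDimensional_homsWithValuesIn (span_range_monomial_mem_eq_top hT) c
  obtain ⟨s, hs⟩ := (Submodule.fg_iff_finiteDimensional W).2 this
  exact ⟨s, fun φ hφ => (hW φ).2 (hs ▸ Submodule.subset_span hφ), fun φ hφ => hs ▸ (hW φ).1 hφ⟩
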